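/- Let n ≥ 1, i ∈ [n], and π ∈ B_n. Then π(i) > 0 if and only if inv_i(π) ≤ n − i. -/
import Mathlib


/-- A signed permutation `π` of `[n]`: `π(i) = ε i · σ(i)` with `σ` a permutation
of `[n]` and signs `ε i ∈ {±1}`.  Positions are encoded by `Fin n`
(position `i ∈ [n]` corresponds to `⟨i-1, _⟩ : Fin n`). -/
structure SignedPerm (n : ℕ) where
  σ : Equiv.Perm (Fin n)
  ε : Fin n → ℤ
  hε : ∀ i, ε i = 1 ∨ ε i = -1

namespace SignedPerm

variable {n : ℕ}

/-- The signed value `π(i) = ε i · σ(i) ∈ {-n, …, -1, 1, …, n}` (1-based value). -/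
def val (π : SignedPerm n) (i : Fin n) : ℤ :=
  π.ε i * ((π.σ i : ℕ) + 1)

/-- The standard basis vector `e i` of `ℝ^n`. -/
def e (i : Fin n) : Fin n → ℝ := Pi.single i 1

/-- The action of a signed permutation on `ℝ^n`, determined by
`π · e i = ε i · e (σ i)`. -/
def act (π : SignedPerm n) (v : Fin n → ℝ) : Fin n → ℝ :=
  fun j => (π.ε (π.σ.symm j) : ℝ) * v (π.σ.symm j)

/-- The positive root system `Φₙ⁺ = {e k, e i + e j, e i - e j : k, i < j}` of `Bₙ`. -/
def PhiPos (n : ℕ) : Set (Fin n → ℝ) :=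
  {v | (∃ k : Fin n, v = e k) ∨ ∃ i j : Fin n, i < j ∧ (v = e i + e j ∨ v = e i - e j)}

/-- The positive roots `Φₙ,ᵢ⁺ = {e i, e i + e j, e i - e j : i < j ≤ n}`. -/
def PhiPosI (n : ℕ) (i : Fin n) : Set (Fin n → ℝ) :=
  {v | v = e i ∨ ∃ j : Fin n, i < j ∧ (v = e i + e j ∨ v = e i - e j)}

/-- The `i`-inversion number `invᵢ π = #{v ∈ Φₙ,ᵢ⁺ : π · v ∈ -Φₙ⁺}`. -/
noncomputable def invi (i : Fin n) (π : SignedPerm n) : ℕ :=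
  Set.ncard {v | v ∈ PhiPosI n i ∧ -(π.act v) ∈ PhiPos n}

/-- The inversion number `inv π = #{v ∈ Φₙ⁺ : π · v ∈ -Φₙ⁺}`. -/
noncomputable def inv (π : SignedPerm n) : ℕ :=
  Set.ncard {v | v ∈ PhiPos n ∧ -(π.act v) ∈ PhiPos n}

end SignedPerm

open SignedPerm

namespace SPaux

variable {n : ℕ}

lemma e_apply (a b : Fin n) : e a b = if b = a then (1:ℝ) else 0 := Pi.single_apply a 1 b

lemma e_nonneg (a b : Fin n) : 0 ≤ e a b := by
  rw [e_apply]; split <;> norm_num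

lemma exists_one_of_mem {v : Fin n → ℝ} (h : v ∈ PhiPos n) : ∃ m, v m = 1 := by
  rcases h with ⟨k, rfl⟩ | ⟨a, b, hab, rfl | rfl⟩
  · exact ⟨k, by simp [e_apply]⟩
  · exact ⟨a, by simp [e_apply, hab.ne]⟩
  · exact ⟨a, by simp [e_apply, hab.ne]⟩

lemma notMem_of_nonpos {v : Fin n → ℝ} (h : ∀ m, v m ≤ 0) : v ∉ PhiPos n := by
  intro hv
  obtain ⟨m, hm⟩ := exists_one_of_mem hv
  linarith [h m]

lemma sub_mem_iff {a b : Fin n} (hab : a ≠ b) : e a - e b ∈ PhiPos n ↔ a < b := by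
  constructor
  · rintro (⟨k, hk⟩ | ⟨c, d, hcd, hv | hv⟩)
    · have hb := congrFun hk b
      simp only [Pi.sub_apply, e_apply, if_neg hab.symm, if_pos rfl] at hb
      split_ifs at hb <;> norm_num at hb
    · have hb := congrFun hv b
      simp only [Pi.sub_apply, Pi.add_apply, e_apply, if_neg hab.symm, if_pos rfl] at hb
      split_ifs at hb <;> norm_num at hb
    · have ha := congrFun hv a
      have hb := congrFun hv b
      simp only [Pi.sub_apply, e_apply, if_neg hab.symm, if_pos rfl, if_neg hab] at ha hb
      rcases eq_or_ne a c with rfl | hac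
      · rcases eq_or_ne b d with rfl | hbd
        · exact hcd
        · rw [if_neg hbd] at hb
          split_ifs at hb <;> norm_num at hb
      · rw [if_neg hac] at ha
        split_ifs at ha <;> norm_num at ha
  · intro h
    exact Or.inr ⟨a, b, h, Or.inr rfl⟩

lemma add_mem {a b : Fin n} (hab : a ≠ b) : e a + e b ∈ PhiPos n := by
  rcases hab.lt_or_gt with h | h
  · exact Or.inr ⟨a, b, h, Or.inl rfl⟩
  · exact Or.inr ⟨b, a, h, Or.inl (add_comm (e a) (e b))⟩

lemma act_e (π : SignedPerm n) (j : Fin n) :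
    π.act (e j) = ((π.ε j : ℤ) : ℝ) • e (π.σ j) := by
  funext m
  simp only [SignedPerm.act, Pi.smul_apply, smul_eq_mul, e_apply, Equiv.symm_apply_eq]
  by_cases h : m = π.σ j
  · subst h; simp
  · simp [h]

lemma act_add (π : SignedPerm n) (v w : Fin n → ℝ) :
    π.act (v + w) = π.act v + π.act w := by
  funext m; simp [SignedPerm.act]; ring

lemma act_sub (π : SignedPerm n) (v w : Fin n → ℝ) :
    π.act (v - w) = π.act v - π.act w := by
  funext m; simp [SignedPerm.act]; ring

lemma phiPosI_finite (i : Fin n) : (PhiPosI n i).Finite := by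
  apply Set.Finite.subset
    (s := insert (e i) ((Set.range fun j => e i + e j) ∪ Set.range fun j => e i - e j))
  · exact (((Set.finite_range _).union (Set.finite_range _)).insert _)
  · rintro v (rfl | ⟨j, _, rfl | rfl⟩)
    · exact Set.mem_insert _ _
    · exact Set.mem_insert_of_mem _ (Or.inl ⟨j, rfl⟩)
    · exact Set.mem_insert_of_mem _ (Or.inr ⟨j, rfl⟩)

lemma ncard_Ioi (i : Fin n) : {j : Fin n | i < j}.ncard = n - 1 - i.val := by
  rw [show {j : Fin n | i < j} = (Finset.Ioi i : Set (Fin n)) from (Finset.coe_Ioi i).symm,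
    Set.ncard_coe_finset, Fin.card_Ioi]

end SPaux

open SPaux

open SignedPerm in
/-- `π(i) > 0` iff `invᵢ(π) ≤ n - i`
(here the position `i ∈ [n]` is `i.val + 1` in 1-based indexing). -/
theorem val_pos_iff_invi_le (n : ℕ) (hn : 1 ≤ n) (i : Fin n) (π : SignedPerm n) :
    0 < π.val i ↔ invi i π ≤ n - (i.val + 1) := by
  have hσne : ∀ j : Fin n, i ≠ j → π.σ i ≠ π.σ j := fun j h hc => h (π.σ.injective hc)
  set f : Fin n → (Fin n → ℝ) := fun j => if π.ε j = 1 then e i - e j else e i + e j with hf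
  have hfP : ∀ j : Fin n, i < j → f j ∈ PhiPosI n i := by
    intro j hij
    by_cases h : π.ε j = 1
    · exact Or.inr ⟨j, hij, Or.inr (by simp [hf, h])⟩
    · exact Or.inr ⟨j, hij, Or.inl (by simp [hf, h])⟩
  have hfact : ∀ j : Fin n, π.act (f j) = ((π.ε i : ℤ) : ℝ) • e (π.σ i) - e (π.σ j) := by
    intro j
    by_cases h : π.ε j = 1
    · simp only [hf, if_pos h]
      rw [act_sub, act_e, act_e, h]; push_cast; module
    · have h' : π.ε j = -1 := (π.hε j).resolve_left h
      simp only [hf, if_neg h]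
      rw [act_add, act_e, act_e, h']; push_cast; module
  have hfeq : ∀ j : Fin n, f j = e i - ((π.ε j : ℤ) : ℝ) • e j := by
    intro j
    by_cases h : π.ε j = 1
    · simp only [hf]; rw [if_pos h, h]; push_cast; module
    · have h' : π.ε j = -1 := (π.hε j).resolve_left h
      simp only [hf]; rw [if_neg h, h']; push_cast; module
  have hfinj : Set.InjOn f {j : Fin n | i < j} := by
    intro j hj j' hj' h
    rw [hfeq j, hfeq j'] at h
    have h2 : ((π.ε j : ℤ) : ℝ) • e j = ((π.ε j' : ℤ) : ℝ) • e j' :=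
      sub_right_injective h
    by_cases hh : j = j'
    · exact hh
    · exfalso
      have hcj := congrFun h2 j
      simp only [Pi.smul_apply, smul_eq_mul, e_apply, if_pos rfl, if_neg hh,
        mul_one, mul_zero] at hcj
      rcases π.hε j with h4 | h4 <;> rw [h4] at hcj <;> norm_num at hcj
  have hval : (0 < π.val i) ↔ π.ε i = 1 := by
    rcases π.hε i with h | h
    · refine iff_of_true ?_ h
      rw [SignedPerm.val, h, one_mul]
      positivity
    · refine iff_of_false ?_ ?_
      · intro h2
        rw [SignedPerm.val, h] at h2
        omega
      · rw [h]; norm_num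
  rw [hval]
  rcases π.hε i with h1 | h1
  · -- positive case
    have hS : {v | v ∈ PhiPosI n i ∧ -(π.act v) ∈ PhiPos n}
        = f '' {j : Fin n | i < j ∧ π.σ j < π.σ i} := by
      ext v
      constructor
      · rintro ⟨hv1, hv2⟩
        rcases hv1 with rfl | ⟨j, hij, rfl | rfl⟩
        · exfalso
          apply notMem_of_nonpos _ hv2
          intro m
          rw [act_e, h1]
          simp only [Pi.neg_apply, Pi.smul_apply, smul_eq_mul, Int.cast_one, one_mul,
            neg_nonpos]
          exact e_nonneg _ _
        · rcases π.hε j with h2 | h2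
          · exfalso
            apply notMem_of_nonpos _ hv2
            intro m
            rw [act_add, act_e, act_e, h1, h2]
            simp only [Pi.neg_apply, Pi.add_apply, Pi.smul_apply, smul_eq_mul,
              Int.cast_one, one_mul, neg_nonpos]
            have := e_nonneg (π.σ i) m
            have := e_nonneg (π.σ j) m
            linarith
          · have hact : -(π.act (e i + e j)) = e (π.σ j) - e (π.σ i) := by
              rw [act_add, act_e, act_e, h1, h2]; push_cast; module
            rw [hact] at hv2
            have hlt := (sub_mem_iff (Ne.symm (hσne j hij.ne))).mp hv2
            refine ⟨j, ⟨hij, hlt⟩, ?_⟩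
            simp [hf, h2]
        · rcases π.hε j with h2 | h2
          · have hact : -(π.act (e i - e j)) = e (π.σ j) - e (π.σ i) := by
              rw [act_sub, act_e, act_e, h1, h2]; push_cast; module
            rw [hact] at hv2
            have hlt := (sub_mem_iff (Ne.symm (hσne j hij.ne))).mp hv2
            refine ⟨j, ⟨hij, hlt⟩, ?_⟩
            simp [hf, h2]
          · exfalso
            apply notMem_of_nonpos _ hv2
            intro m
            rw [act_sub, act_e, act_e, h1, h2]
            simp only [Pi.neg_apply, Pi.sub_apply, Pi.smul_apply, smul_eq_mul,
              Int.cast_one, one_mul, Int.cast_neg, neg_mul, sub_neg_eq_add, neg_nonpos]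
            have := e_nonneg (π.σ i) m
            have := e_nonneg (π.σ j) m
            linarith
      · rintro ⟨j, ⟨hij, hlt⟩, rfl⟩
        refine ⟨hfP j hij, ?_⟩
        have hact : -(π.act (f j)) = e (π.σ j) - e (π.σ i) := by
          rw [hfact, h1]; push_cast; module
        rw [hact]
        exact (sub_mem_iff (Ne.symm (hσne j hij.ne))).mpr hlt
    have hle : invi i π ≤ n - (i.val + 1) := by
      rw [SignedPerm.invi, hS, Set.ncard_image_of_injOn
        (hfinj.mono (fun x hx => hx.1))]
      calc {j : Fin n | i < j ∧ π.σ j < π.σ i}.ncard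
          ≤ {j : Fin n | i < j}.ncard :=
            Set.ncard_le_ncard (fun x hx => hx.1) (Set.toFinite _)
        _ = n - 1 - i.val := ncard_Ioi i
        _ = n - (i.val + 1) := by omega
    exact iff_of_true h1 hle
  · -- negative case
    have hsub : insert (e i) (f '' {j : Fin n | i < j})
        ⊆ {v | v ∈ PhiPosI n i ∧ -(π.act v) ∈ PhiPos n} := by
      rintro v (rfl | ⟨j, hij, rfl⟩)
      · refine ⟨Or.inl rfl, ?_⟩
        have hact : -(π.act (e i)) = e (π.σ i) := by
          rw [act_e, h1]; push_cast; module
        rw [hact]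
        exact Or.inl ⟨π.σ i, rfl⟩
      · refine ⟨hfP j hij, ?_⟩
        have hact : -(π.act (f j)) = e (π.σ i) + e (π.σ j) := by
          rw [hfact, h1]; push_cast; module
        rw [hact]
        exact add_mem (hσne j hij.ne)
    have hnotmem : e i ∉ f '' {j : Fin n | i < j} := by
      rintro ⟨j, hij, hfj⟩
      have hij' : i < j := hij
      have hc := congrFun hfj j
      rw [hfeq] at hc
      simp only [Pi.sub_apply, Pi.smul_apply, smul_eq_mul, e_apply, if_pos rfl,
        mul_one, if_neg hij'.ne'] at hc
      rcases π.hε j with h4 | h4 <;> rw [h4] at hc <;> norm_num at hc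
    have hge : n - i.val ≤ invi i π := by
      have hfin : {v | v ∈ PhiPosI n i ∧ -(π.act v) ∈ PhiPos n}.Finite :=
        (phiPosI_finite i).subset (fun v hv => hv.1)
      have h2 : (insert (e i) (f '' {j : Fin n | i < j})).ncard = n - i.val := by
        rw [Set.ncard_insert_of_notMem hnotmem ((Set.toFinite _).image f),
          Set.ncard_image_of_injOn hfinj, ncard_Ioi]
        have := i.isLt
        omega
      rw [SignedPerm.invi, ← h2]
      exact Set.ncard_le_ncard hsub hfin
    refine iff_of_false ?_ ?_
    · intro hc; rw [h1] at hc; norm_num at hc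
    · intro hc
      have := i.isLt
      omega
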